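/- arXiv:1709.02803 — 4 statements merged into one kernel-verified Lean document; each statement's English description precedes it below -/
import Mathlib

section
/- Let U ⊆ ℝ³ be open, let d : ℝ³ → ℝ be C² on U with ‖∇d(q)‖ = 1 for all q ∈ U, and set ν = ∇d. Then for every vector field v : ℝ³ → ℝ³ differentiable on U and every p ∈ U, the surface curl of v equals minus the surface divergence of the rotated field ν × v: (curl v)(p)·ν(p) = −[ div(ν × v)(p) − ν(p)·( D(ν × v)(p) ν(p) ) ]. (This is the identity Rot_S v = −Div_S(ν × v) used in the paper to pass from the velocity v to the rotated unknown w = ν × v.) -/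
noncomputable section
open RealInnerProductSpace

abbrev E3 := EuclideanSpace ℝ (Fin 3)

/-- Build a vector in `ℝ³` from its three Cartesian components. -/
def vec3 (a b c : ℝ) : E3 := (WithLp.equiv 2 (Fin 3 → ℝ)).symm ![a, b, c]

/-- The `i`-th standard basis vector of `ℝ³`. -/
def e3 (i : Fin 3) : E3 := EuclideanSpace.single i 1

/-- Divergence of a vector field: the trace of its Jacobian. -/
def div3 (v : E3 → E3) (p : E3) : ℝ := LinearMap.trace ℝ E3 (fderiv ℝ v p : E3 →ₗ[ℝ] E3)

/-- Curl of a vector field on `ℝ³`. -/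
def curl3 (v : E3 → E3) (p : E3) : E3 :=
  vec3 (fderiv ℝ v p (e3 1) 2 - fderiv ℝ v p (e3 2) 1)
       (fderiv ℝ v p (e3 2) 0 - fderiv ℝ v p (e3 0) 2)
       (fderiv ℝ v p (e3 0) 1 - fderiv ℝ v p (e3 1) 0)

/-- Cross product on `ℝ³`. -/
def cross3 (a b : E3) : E3 :=
  vec3 (a 1 * b 2 - a 2 * b 1) (a 2 * b 0 - a 0 * b 2) (a 0 * b 1 - a 1 * b 0)

/-!
Writing `ν = ∇d` and `w = ν × v`, the product rule gives `div w = curl ν · v - ν · curl v`, and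
`curl ν = 0` because the Hessian `H` of `d` is symmetric. Differentiating `‖ν‖² = 1` gives
`ν · H u = 0` for all `u`, so `H ν = 0` by symmetry; hence `Dw ν = ν × (Dv ν)`, which is
orthogonal to `ν`. The surface divergence of `w` is therefore just `div w = -ν · curl v`.
-/

open scoped Gradient Topology

section Gradient

variable {F : Type*} [NormedAddCommGroup F] [InnerProductSpace ℝ F] [CompleteSpace F]
  {d : F → ℝ} {p : F}

theorem ContDiffAt.differentiableAt_gradient (hd : ContDiffAt ℝ 2 d p) :
    DifferentiableAt ℝ (∇ d) p := by
  have : DifferentiableAt ℝ (fderiv ℝ d) p :=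
    (hd.fderiv_right (m := 1) (by norm_num)).differentiableAt one_ne_zero
  exact (InnerProductSpace.toDual ℝ F).symm.differentiableAt.comp p this

theorem inner_fderiv_gradient_apply (u w : F) :
    ⟪fderiv ℝ (∇ d) p u, w⟫ = fderiv ℝ (fderiv ℝ d) p u w := by
  have : ∇ d = (InnerProductSpace.toDual ℝ F).symm ∘ fderiv ℝ d := rfl
  rw [this, LinearIsometryEquiv.comp_fderiv]
  exact InnerProductSpace.toDual_symm_apply

theorem ContDiffAt.inner_fderiv_gradient_comm (hd : ContDiffAt ℝ 2 d p) (u w : F) :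
    ⟪fderiv ℝ (∇ d) p u, w⟫ = ⟪fderiv ℝ (∇ d) p w, u⟫ := by
  rw [inner_fderiv_gradient_apply, inner_fderiv_gradient_apply]
  exact hd.isSymmSndFDerivAt (by simp) u w

theorem ContDiffAt.fderiv_gradient_apply_gradient_eq_zero (hd : ContDiffAt ℝ 2 d p) {c : ℝ}
    (hc : ∀ᶠ q in 𝓝 p, ‖∇ d q‖ = c) : fderiv ℝ (∇ d) p (∇ d p) = 0 := by
  have hν := hd.differentiableAt_gradient.hasFDerivAt
  have hconst : (fun q => ⟪∇ d q, ∇ d q⟫) =ᶠ[𝓝 p] fun _ => c ^ 2 := by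
    filter_upwards [hc] with q hq
    rw [real_inner_self_eq_norm_sq, hq]
  have horth (u : F) : ⟪fderiv ℝ (∇ d) p u, ∇ d p⟫ = 0 := by
    have h := congrArg (· u) ((hν.inner ℝ hν).fderiv.symm.trans hconst.fderiv_eq)
    simp only [ContinuousLinearMap.comp_apply, ContinuousLinearMap.prod_apply,
      fderivInnerCLM_apply, fderiv_fun_const, Pi.zero_apply, zero_apply] at h
    rw [real_inner_comm] at h
    linarith
  rw [← inner_self_eq_zero (𝕜 := ℝ), hd.inner_fderiv_gradient_comm, horth]

end Gradient

section Euclidean3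

theorem inner_e3 (x : E3) (i : Fin 3) : ⟪x, e3 i⟫ = x i := by
  simp [e3, EuclideanSpace.inner_single_right]

theorem div3_eq_sum (v : E3 → E3) (p : E3) : div3 v p = ∑ i, fderiv ℝ v p (e3 i) i := by
  rw [div3, LinearMap.trace_eq_matrix_trace ℝ (PiLp.basisFun 2 ℝ (Fin 3)), Matrix.trace]
  rfl

def crossCLM : E3 →L[ℝ] E3 →L[ℝ] E3 :=
  let L := WithLp.linearEquiv 2 ℝ (Fin 3 → ℝ)
  LinearMap.toContinuousLinearMap (LinearMap.toContinuousLinearMap.toLinearMap ∘ₗ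
    (crossProduct.compl₁₂ L.toLinearMap L.toLinearMap).compr₂ L.symm.toLinearMap)

@[simp] theorem crossCLM_apply (a b : E3) : crossCLM a b = cross3 a b := by
  ext i
  fin_cases i <;> simp [crossCLM, cross3, vec3, cross_apply]

@[simp] theorem cross3_zero_left (b : E3) : cross3 0 b = 0 := by
  simp [← crossCLM_apply]

theorem inner_self_cross3 (a b : E3) : ⟪a, cross3 a b⟫ = 0 := by
  simp only [cross3, vec3, WithLp.equiv_symm_apply, PiLp.inner_apply, RCLike.inner_apply,
    Real.ringHom_apply, Fin.sum_univ_three, Matrix.cons_val_zero, Matrix.cons_val_one,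
    Matrix.cons_val]
  ring

variable {a b : E3 → E3} {p : E3}

theorem HasFDerivAt.cross3 {a' b' : E3 →L[ℝ] E3} (ha : HasFDerivAt a a' p)
    (hb : HasFDerivAt b b' p) :
    HasFDerivAt (fun q => cross3 (a q) (b q))
      ((crossCLM (a p)).comp b' + (crossCLM.comp a').flip (b p)) p :=
  (crossCLM.hasFDerivAt.comp p ha).clm_apply hb

theorem fderiv_cross3_apply (ha : DifferentiableAt ℝ a p) (hb : DifferentiableAt ℝ b p)
    (u : E3) :
    fderiv ℝ (fun q => cross3 (a q) (b q)) p u =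
      cross3 (a p) (fderiv ℝ b p u) + cross3 (fderiv ℝ a p u) (b p) := by
  simp [(ha.hasFDerivAt.cross3 hb.hasFDerivAt).fderiv]

theorem div3_cross3 (ha : DifferentiableAt ℝ a p) (hb : DifferentiableAt ℝ b p) :
    div3 (fun q => cross3 (a q) (b q)) p = ⟪curl3 a p, b p⟫ - ⟪a p, curl3 b p⟫ := by
  simp only [div3_eq_sum, fderiv_cross3_apply ha hb]
  simp only [cross3, curl3, vec3,
    WithLp.equiv_symm_apply, PiLp.add_apply, Fin.sum_univ_three, Matrix.cons_val_zero,
    Matrix.cons_val_one, Matrix.cons_val, PiLp.inner_apply, RCLike.inner_apply, Real.ringHom_apply]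
  ring

theorem curl3_gradient_eq_zero (d : E3 → ℝ) (hd : ContDiffAt ℝ 2 d p) : curl3 (∇ d) p = 0 := by
  have hsym (i j : Fin 3) : fderiv ℝ (∇ d) p (e3 i) j = fderiv ℝ (∇ d) p (e3 j) i := by
    rw [← inner_e3, hd.inner_fderiv_gradient_comm, inner_e3]
  ext i
  fin_cases i <;> simp [curl3, vec3, hsym 1 2, hsym 2 0, hsym 0 1]

end Euclidean3

/-- Surface curl equals minus the surface divergence of the rotated field:
`Rot_S v = −Div_S(ν × v)` where `ν = ∇d` is the unit normal of the level
surfaces of an eikonal function `d`. -/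
theorem rotSurf_eq_neg_divSurf_rotated
    (U : Set E3) (hU : IsOpen U) (d : E3 → ℝ)
    (hd : ContDiffOn ℝ 2 d U)
    (heik : ∀ q ∈ U, ‖gradient d q‖ = 1)
    (v : E3 → E3) (hv : DifferentiableOn ℝ v U) :
    ∀ p ∈ U,
      ⟪curl3 v p, gradient d p⟫ =
        -(div3 (fun q => cross3 (gradient d q) (v q)) p -
           ⟪gradient d p,
             fderiv ℝ (fun q => cross3 (gradient d q) (v q)) p (gradient d p)⟫) := by
  intro p hp
  have hUp : U ∈ 𝓝 p := hU.mem_nhds hp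
  have hdp : ContDiffAt ℝ 2 d p := hd.contDiffAt hUp
  have hν : DifferentiableAt ℝ (∇ d) p := hdp.differentiableAt_gradient
  have hvp : DifferentiableAt ℝ v p := hv.differentiableAt hUp
  have hνν : fderiv ℝ (∇ d) p (∇ d p) = 0 :=
    hdp.fderiv_gradient_apply_gradient_eq_zero (Filter.eventually_of_mem hUp heik)
  rw [div3_cross3 hν hvp, curl3_gradient_eq_zero d hdp, fderiv_cross3_apply hν hvp, hνν,
    cross3_zero_left, add_zero, inner_self_cross3, inner_zero_left, real_inner_comm]
  ring
end
end

section
/- Let R = 2 and r = 1/2, and let p = (x, y, z) satisfy T(p) = 0 (which forces x² + z² > 0). Then the field v_θ is tangent to the torus: ∇T(p) · v_θ(p) = 0, where v_θ(x,y,z) = (1/(2s))·(−xy/s, s − 2, −yz/s) with s = √(x²+z²). -/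
noncomputable section
open RealInnerProductSpace

/-- The torus level function `T(x,y,z) = (x² + y² + z² + R² − r²)² − 4R²(x² + z²)`. -/
def torusT (R r : ℝ) (p : E3) : ℝ :=
  (p 0 ^ 2 + p 1 ^ 2 + p 2 ^ 2 + R ^ 2 - r ^ 2) ^ 2 - 4 * R ^ 2 * (p 0 ^ 2 + p 2 ^ 2)


/-- The second harmonic vector field on the torus (with `R = 2`, `r = 1/2`):
`v_θ(x,y,z) = (1/(2s))·(−xy/s, s − 2, −yz/s)` with `s = √(x²+z²)`. -/
def vTheta (p : E3) : E3 :=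
  (1 / (2 * Real.sqrt (p 0 ^ 2 + p 2 ^ 2))) •
    vec3 (-(p 0 * p 1) / Real.sqrt (p 0 ^ 2 + p 2 ^ 2))
         (Real.sqrt (p 0 ^ 2 + p 2 ^ 2) - 2)
         (-(p 1 * p 2) / Real.sqrt (p 0 ^ 2 + p 2 ^ 2))

/-! With `A = x² + y² + z² + R² − r²` and `s = √(x² + z²)`, the gradient of the torus function is
`∇T = 4A·p − 8R²·(x, 0, z)`, and pairing it with `v_θ` gives `4y(4s − A)/s` (for `R = 2`).
On the torus `A² = 4R²s²`, and `A ≥ 0` because `r < R`, so `A = 2Rs` and the pairing vanishes. -/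

theorem inner_E3 (a b : E3) : ⟪a, b⟫ = a 0 * b 0 + a 1 * b 1 + a 2 * b 2 := by
  simp only [EuclideanSpace.inner_eq_star_dotProduct, dotProduct, Pi.star_apply, star_trivial,
    Fin.sum_univ_three]
  ring

theorem hasGradientAt_torusT (R r : ℝ) (p : E3) :
    HasGradientAt (torusT R r)
      ((4 * (p 0 ^ 2 + p 1 ^ 2 + p 2 ^ 2 + R ^ 2 - r ^ 2)) • p
        - (8 * R ^ 2) • vec3 (p 0) 0 (p 2)) p := by
  have hc (i : Fin 3) : HasFDerivAt (fun q : E3 => q i) (EuclideanSpace.proj (𝕜 := ℝ) i) p :=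
    PiLp.hasFDerivAt_apply _ p i
  have hT := ((((((hc 0).pow 2).add ((hc 1).pow 2)).add ((hc 2).pow 2)).add_const (R ^ 2)).sub_const
    (r ^ 2)).pow 2 |>.sub ((((hc 0).pow 2).add ((hc 2).pow 2)).const_mul (4 * R ^ 2))
  refine hasGradientAt_iff_hasFDerivAt.2 (hT.congr_fderiv ?_)
  ext w
  simp only [Pi.add_apply, Nat.add_one_sub_one, pow_one, nsmul_eq_mul, Nat.cast_ofNat, smul_add,
    sub_apply, add_apply, smul_apply,
    PiLp.proj_apply, smul_eq_mul, vec3, WithLp.equiv_symm_apply, map_sub, map_smul,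
    InnerProductSpace.toDual_apply_apply, inner_E3, Matrix.cons_val_zero, Matrix.cons_val_one,
    Matrix.cons_val]
  ring

theorem sum_sq_add_eq_of_torusT_eq_zero {R r : ℝ} (hR : 0 ≤ R) (hrR : r ^ 2 ≤ R ^ 2) {p : E3}
    (hp : torusT R r p = 0) :
    p 0 ^ 2 + p 1 ^ 2 + p 2 ^ 2 + R ^ 2 - r ^ 2 = 2 * R * √(p 0 ^ 2 + p 2 ^ 2) := by
  have hs : √(p 0 ^ 2 + p 2 ^ 2) ^ 2 = p 0 ^ 2 + p 2 ^ 2 := Real.sq_sqrt (by positivity)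
  refine (pow_left_inj₀ (by nlinarith [sq_nonneg (p 0), sq_nonneg (p 1), sq_nonneg (p 2)])
    (by positivity) two_ne_zero).1 ?_
  rw [torusT, sub_eq_zero] at hp
  rw [hp, mul_pow, hs]
  ring

/-- On the axis `s = 0` both sides are `0`, as `vTheta` is then `0 • _`. -/
theorem inner_gradient_torusT_vTheta (r : ℝ) (p : E3) :
    ⟪gradient (torusT 2 r) p, vTheta p⟫ =
      4 * p 1 * (2 * 2 * √(p 0 ^ 2 + p 2 ^ 2) - (p 0 ^ 2 + p 1 ^ 2 + p 2 ^ 2 + 2 ^ 2 - r ^ 2))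
        / √(p 0 ^ 2 + p 2 ^ 2) := by
  rw [(hasGradientAt_torusT 2 r p).gradient]
  set s := √(p 0 ^ 2 + p 2 ^ 2) with hs_def
  rcases eq_or_ne s 0 with hs | hs
  · simp [vTheta, ← hs_def, hs]
  have hs2 : s ^ 2 = p 0 ^ 2 + p 2 ^ 2 := Real.sq_sqrt (by positivity)
  simp only [inner_E3, vTheta, ← hs_def, vec3, WithLp.equiv_symm_apply, PiLp.sub_apply,
    PiLp.smul_apply, smul_eq_mul, Matrix.cons_val_zero, Matrix.cons_val_one, Matrix.cons_val]
  field_simp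
  linear_combination p 1 * (4 * (p 0 ^ 2 + p 1 ^ 2 + p 2 ^ 2 + 2 ^ 2 - r ^ 2) - 32) * hs2

/-- On the torus `{T = 0}` with `R = 2`, `r = 1/2`, the field `v_θ` is tangent:
`∇T(p) · v_θ(p) = 0`. -/
theorem vTheta_tangent (p : E3) (hp : torusT 2 (1 / 2) p = 0) :
    ⟪gradient (torusT 2 (1 / 2)) p, vTheta p⟫ = 0 := by
  rw [inner_gradient_torusT_vTheta, sum_sq_add_eq_of_torusT_eq_zero zero_le_two (by norm_num) hp,
    sub_self, mul_zero, zero_div]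
end
end

section
/- For all real R, r and every p = (x, y, z) with x² + z² ≠ 0, the normal–normal part of the Jacobian of v_φ vanishes in the direction of ∇T: ∇T(p) · ( Dv_φ(p) ∇T(p) ) = 0, where v_φ(x,y,z) = (1/(4(x²+z²)))·(−z, 0, x). Combined with div v_φ = 0, this shows that the surface divergence Div_S v_φ = div v_φ − ν·(Dv_φ ν) vanishes on every level surface of T with unit normal ν = ∇T/‖∇T‖, so v_φ is a harmonic (divergence- and curl-free) tangential field on the torus. -/
noncomputable section
open RealInnerProductSpace

/-- The first harmonic vector field on the torus:
`v_φ(x,y,z) = (1/(4(x²+z²)))·(−z, 0, x)`. -/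
def vPhi (p : E3) : E3 :=
  (1 / (4 * (p 0 ^ 2 + p 2 ^ 2))) • vec3 (-(p 2)) 0 (p 0)

/-!
Write `v_φ = f • A` with `f q = 1 / (4 (x² + z²))` and `A` the infinitesimal rotation about
the y-axis, a skew-symmetric linear map. Then `Dv_φ(p) n = f(p) • A n + (Df(p) n) • A p`, so
`⟪n, Dv_φ(p) n⟫ = f(p) ⟪n, A n⟫ + (Df(p) n) ⟪n, A p⟫`. The first term vanishes by skewness;
the second vanishes for `n = ∇T(p)`, because `⟪∇T(p), A p⟫ = DT(p)(A p)` is the derivative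
of `T` along the rotation orbit through `p`, and `T` depends only on `‖q‖²` and `x² + z²`.
-/

section

variable {E : Type*} [NormedAddCommGroup E] [InnerProductSpace ℝ E]

theorem inner_fderiv_smul_skew_apply_eq_zero {f : E → ℝ} {A : E →L[ℝ] E} {p n : E}
    (hA : ∀ x, ⟪x, A x⟫ = 0) (hf : DifferentiableAt ℝ f p) (hn : ⟪n, A p⟫ = 0) :
    ⟪n, fderiv ℝ (fun q => f q • A q) p n⟫ = 0 := by
  rw [fderiv_fun_smul hf A.differentiableAt, A.fderiv]
  simp [inner_add_right, real_inner_smul_right, hA, hn]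

end

def yAxisRotGen : E3 →L[ℝ] E3 :=
  (EuclideanSpace.proj 0).smulRight (e3 2) - (EuclideanSpace.proj 2).smulRight (e3 0)

lemma yAxisRotGen_apply (q : E3) : yAxisRotGen q = vec3 (-(q 2)) 0 (q 0) := by
  ext i
  fin_cases i <;> simp [yAxisRotGen, vec3, e3]

lemma inner_yAxisRotGen_self (x : E3) : ⟪x, yAxisRotGen x⟫ = 0 := by
  simp only [yAxisRotGen, e3, sub_apply, ContinuousLinearMap.smulRight_apply,
    PiLp.proj_apply, inner_sub_right, real_inner_smul_right, EuclideanSpace.inner_single_right,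
    Real.ringHom_apply, one_mul]
  ring

lemma vPhi_eq_smul_yAxisRotGen :
    vPhi = fun q => (1 / (4 * (q 0 ^ 2 + q 2 ^ 2))) • yAxisRotGen q := by
  funext q
  rw [yAxisRotGen_apply, vPhi]

lemma fderiv_torusT_apply (R r : ℝ) (p h : E3) :
    fderiv ℝ (torusT R r) p h =
      4 * (p 0 ^ 2 + p 1 ^ 2 + p 2 ^ 2 + R ^ 2 - r ^ 2) * (p 0 * h 0 + p 1 * h 1 + p 2 * h 2)
        - 8 * R ^ 2 * (p 0 * h 0 + p 2 * h 2) := by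
  have hc (i : Fin 3) : HasFDerivAt (fun q : E3 => q i) (EuclideanSpace.proj (𝕜 := ℝ) i) p :=
    (EuclideanSpace.proj i : E3 →L[ℝ] ℝ).hasFDerivAt
  have hT : HasFDerivAt (torusT R r) _ p :=
    ((((((hc 0).pow 2).add ((hc 1).pow 2)).add ((hc 2).pow 2)).add_const (R ^ 2)).sub_const (r ^ 2)
      |>.pow 2).sub ((((hc 0).pow 2).add ((hc 2).pow 2)).const_mul (4 * R ^ 2))
  rw [hT.fderiv]
  simp only [Pi.add_apply, Nat.add_one_sub_one, pow_one, nsmul_eq_mul, Nat.cast_ofNat, smul_add,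
    sub_apply, add_apply, smul_apply, PiLp.proj_apply, smul_eq_mul]
  ring

lemma fderiv_torusT_yAxisRotGen (R r : ℝ) (p : E3) :
    fderiv ℝ (torusT R r) p (yAxisRotGen p) = 0 := by
  rw [fderiv_torusT_apply, yAxisRotGen_apply]
  simp only [vec3, WithLp.equiv_symm_apply, Matrix.cons_val_zero, Matrix.cons_val_one,
    Matrix.cons_val, mul_neg, mul_zero, add_zero]
  ring

/-- The normal–normal part of the Jacobian of `v_φ` vanishes in the direction of
`∇T`: `∇T(p) · (Dv_φ(p) ∇T(p)) = 0` away from the y-axis. -/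
theorem vPhi_normal_normal_jacobian_eq_zero (R r : ℝ) (p : E3)
    (hp : p 0 ^ 2 + p 2 ^ 2 ≠ 0) :
    ⟪gradient (torusT R r) p, fderiv ℝ vPhi p (gradient (torusT R r) p)⟫ = 0 := by
  rw [vPhi_eq_smul_yAxisRotGen]
  refine inner_fderiv_smul_skew_apply_eq_zero inner_yAxisRotGen_self ?_ ?_
  · have hden : 4 * (p 0 ^ 2 + p 2 ^ 2) ≠ 0 := mul_ne_zero four_ne_zero hp
    fun_prop (disch := exact hden)
  · rw [inner_gradient_left]
    exact fderiv_torusT_yAxisRotGen R r p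
end
end

section
/- For all real R, r and every p = (x, y, z) with x² + z² ≠ 0, the curl of v_θ is orthogonal to the gradient of the torus level function: (curl v_θ)(p) · ∇T(p) = 0, where v_θ(x,y,z) = (1/(2s))·(−xy/s, s − 2, −yz/s) with s = √(x²+z²). In particular the surface curl Rot_S v_θ = (curl v_θ)·ν vanishes on every level surface of T with unit normal ν = ∇T/‖∇T‖. -/
noncomputable section
open RealInnerProductSpace

/-!
Away from the `y`-axis, with `s² = x² + z²`,
`v_θ = (-xy / (2s²), 1/2 - 1/s, -yz / (2s²))`, and differentiating gives
`curl v_θ = (1/(2s²) + 1/s³) (-z, 0, x)`: the curl is a multiple of the infinitesimal generator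
of the rotations about the `y`-axis. The torus function `T` depends only on `s²` and `y`, so it is
invariant under these rotations and its differential vanishes on that generator.
-/

open EuclideanSpace Filter Topology

/-- The paper's `s²`. -/
def axisDistSq (q : E3) : ℝ := q 0 ^ 2 + q 2 ^ 2

def axisDistSqDeriv (p : E3) : E3 →L[ℝ] ℝ := (2 * p 0) • proj 0 + (2 * p 2) • proj 2

def yRotationField (p : E3) : E3 := vec3 (-p 2) 0 (p 0)

lemma vec3_apply_zero (a b c : ℝ) : vec3 a b c 0 = a := rfl

lemma vec3_apply_one (a b c : ℝ) : vec3 a b c 1 = b := rfl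

lemma vec3_apply_two (a b c : ℝ) : vec3 a b c 2 = c := rfl

lemma smul_vec3 (k a b c : ℝ) : k • vec3 a b c = vec3 (k * a) (k * b) (k * c) := by
  ext i
  fin_cases i <;> rfl

lemma e3_apply (i j : Fin 3) : e3 i j = if j = i then 1 else 0 := by
  simp [e3, PiLp.single_apply]

theorem fderiv_apply_ofLp {ι E : Type*} [Fintype ι] [NormedAddCommGroup E] [NormedSpace ℝ E]
    {v : E → EuclideanSpace ℝ ι} {p : E} (hv : DifferentiableAt ℝ v p) (u : E) (i : ι) :
    fderiv ℝ v p u i = fderiv ℝ (fun q => v q i) p u := by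
  have h : HasFDerivAt (fun q => v q i) _ p :=
    (proj i : EuclideanSpace ℝ ι →L[ℝ] ℝ).hasFDerivAt.comp p hv.hasFDerivAt
  rw [h.fderiv]
  rfl

section

variable {p : E3}

theorem curl3_eq_of_hasFDerivAt {v : E3 → E3} {a b c : E3 →L[ℝ] ℝ}
    (ha : HasFDerivAt (fun q => v q 0) a p) (hb : HasFDerivAt (fun q => v q 1) b p)
    (hc : HasFDerivAt (fun q => v q 2) c p) :
    curl3 v p = vec3 (c (e3 1) - b (e3 2)) (a (e3 2) - c (e3 0)) (b (e3 0) - a (e3 1)) := by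
  have hv : DifferentiableAt ℝ v p := by
    rw [differentiableAt_piLp]
    intro i
    fin_cases i
    exacts [ha.differentiableAt, hb.differentiableAt, hc.differentiableAt]
  simp only [curl3, fderiv_apply_ofLp hv, ha.fderiv, hb.fderiv, hc.fderiv]

lemma axisDistSq_nonneg : 0 ≤ axisDistSq p := by
  unfold axisDistSq
  positivity

lemma sqrt_axisDistSq_ne_zero (hp : axisDistSq p ≠ 0) : √(axisDistSq p) ≠ 0 :=
  Real.sqrt_ne_zero'.mpr (axisDistSq_nonneg.lt_of_ne' hp)

lemma hasFDerivAt_axisDistSq : HasFDerivAt axisDistSq (axisDistSqDeriv p) p := by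
  have h (i : Fin 3) :
      HasFDerivAt (fun q : E3 => q i ^ 2) ((2 * p i) • proj i : E3 →L[ℝ] ℝ) p := by
    simpa using ((proj i : E3 →L[ℝ] ℝ).hasFDerivAt (x := p)).pow 2
  exact (h 0).add (h 2)

theorem fderiv_apply_yRotationField_eq_zero {F : ℝ × ℝ → ℝ}
    (hF : DifferentiableAt ℝ F (axisDistSq p, p 1)) :
    fderiv ℝ (fun q => F (axisDistSq q, q 1)) p (yRotationField p) = 0 := by
  have hπ := hasFDerivAt_axisDistSq.prodMk ((proj 1 : E3 →L[ℝ] ℝ).hasFDerivAt (x := p))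
  have hFπ : HasFDerivAt (fun q => F (axisDistSq q, q 1)) _ p := hF.hasFDerivAt.comp p hπ
  have hrot : axisDistSqDeriv p (yRotationField p) = 0 := by
    simp only [axisDistSqDeriv, yRotationField, add_apply, smul_apply, PiLp.proj_apply,
      vec3_apply_zero, vec3_apply_two, smul_eq_mul]
    ring
  rw [hFπ.fderiv, ContinuousLinearMap.comp_apply, ContinuousLinearMap.prod_apply, hrot,
    PiLp.proj_apply, yRotationField, vec3_apply_one, Prod.mk_zero_zero, map_zero]

theorem fderiv_torusT_apply_yRotationField (R r : ℝ) :
    fderiv ℝ (torusT R r) p (yRotationField p) = 0 := by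
  let F (w : ℝ × ℝ) : ℝ := (w.1 + w.2 ^ 2 + R ^ 2 - r ^ 2) ^ 2 - 4 * R ^ 2 * w.1
  have hT : torusT R r = fun q => F (axisDistSq q, q 1) := by
    funext q
    simp only [F, torusT, axisDistSq]
    ring
  rw [hT]
  exact fderiv_apply_yRotationField_eq_zero (by fun_prop)

lemma vTheta_eq_of_axisDistSq_ne_zero (hp : axisDistSq p ≠ 0) :
    vTheta p = vec3 (-(p 1 * p 0) * (2 * axisDistSq p)⁻¹) (1 / 2 - (√(axisDistSq p))⁻¹)
      (-(p 1 * p 2) * (2 * axisDistSq p)⁻¹) := by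
  have hs := sqrt_axisDistSq_ne_zero hp
  have hs2 : √(axisDistSq p) ^ 2 = axisDistSq p := Real.sq_sqrt axisDistSq_nonneg
  unfold axisDistSq at hp hs hs2
  rw [vTheta, smul_vec3, axisDistSq]
  congr 1 <;> field_simp
  · rw [hs2]
  · rw [hs2]

lemma vTheta_eventuallyEq (hp : axisDistSq p ≠ 0) :
    vTheta =ᶠ[𝓝 p] fun q => vec3 (-(q 1 * q 0) * (2 * axisDistSq q)⁻¹)
      (1 / 2 - (√(axisDistSq q))⁻¹) (-(q 1 * q 2) * (2 * axisDistSq q)⁻¹) := by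
  have hopen : IsOpen {q : E3 | axisDistSq q ≠ 0} :=
    isOpen_ne_fun (by unfold axisDistSq; fun_prop) continuous_const
  filter_upwards [hopen.mem_nhds hp] with q hq using vTheta_eq_of_axisDistSq_ne_zero hq

lemma hasFDerivAt_vThetaRadial (i : Fin 3) (hp : axisDistSq p ≠ 0) :
    HasFDerivAt (fun q => -(q 1 * q i) * (2 * axisDistSq q)⁻¹)
      ((-p i / (2 * axisDistSq p)) • proj 1 + (-p 1 / (2 * axisDistSq p)) • proj i +
        (p 1 * p i / (2 * axisDistSq p ^ 2)) • axisDistSqDeriv p : E3 →L[ℝ] ℝ) p := by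
  have hinv := (hasDerivAt_inv (mul_ne_zero two_ne_zero hp)).comp_hasFDerivAt p
    (hasFDerivAt_axisDistSq.const_mul 2)
  have h := ((((proj 1 : E3 →L[ℝ] ℝ).hasFDerivAt (x := p)).mul
    ((proj i : E3 →L[ℝ] ℝ).hasFDerivAt)).neg).mul hinv
  refine h.congr_fderiv ?_
  ext u
  simp only [axisDistSqDeriv, add_apply, smul_apply, neg_apply, PiLp.proj_apply, smul_eq_mul,
    Pi.mul_apply, Pi.neg_apply, Function.comp_apply]
  field_simp
  ring

lemma hasFDerivAt_vThetaAxial (hp : axisDistSq p ≠ 0) :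
    HasFDerivAt (fun q => 1 / 2 - (√(axisDistSq q))⁻¹)
      ((2 * √(axisDistSq p) ^ 3)⁻¹ • axisDistSqDeriv p) p := by
  have h := ((hasDerivAt_inv (sqrt_axisDistSq_ne_zero hp)).comp_hasFDerivAt p
    (hasFDerivAt_axisDistSq.sqrt hp)).const_sub (1 / 2 : ℝ)
  refine h.congr_fderiv ?_
  ext u
  simp only [neg_apply, smul_apply, smul_eq_mul]
  field_simp

theorem curl3_vTheta (hp : axisDistSq p ≠ 0) :
    curl3 vTheta p =
      ((2 * axisDistSq p)⁻¹ + (√(axisDistSq p) ^ 3)⁻¹) • yRotationField p := by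
  have hv := vTheta_eventuallyEq hp
  rw [curl3_eq_of_hasFDerivAt
    ((hasFDerivAt_vThetaRadial 0 hp).congr_of_eventuallyEq (hv.fun_comp (· 0)))
    ((hasFDerivAt_vThetaAxial hp).congr_of_eventuallyEq (hv.fun_comp (· 1)))
    ((hasFDerivAt_vThetaRadial 2 hp).congr_of_eventuallyEq (hv.fun_comp (· 2))),
    yRotationField, smul_vec3]
  congr 1 <;>
    simp only [axisDistSqDeriv, add_apply, smul_apply, PiLp.proj_apply, e3_apply, Fin.reduceEq,
      ↓reduceIte, smul_eq_mul] <;>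
    field_simp <;> ring

end

/-- The curl of `v_θ` is orthogonal to the gradient of the torus level function
away from the y-axis; in particular the surface curl `Rot_S v_θ` vanishes on every
level surface of `T`. -/
theorem vTheta_curl_orthogonal_gradT (R r : ℝ) (p : E3)
    (hp : p 0 ^ 2 + p 2 ^ 2 ≠ 0) :
    ⟪curl3 vTheta p, gradient (torusT R r) p⟫ = 0 := by
  rw [curl3_vTheta hp, real_inner_smul_left, real_inner_comm, inner_gradient_left,
    fderiv_torusT_apply_yRotationField, mul_zero]
end
end
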